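/- arXiv:2112.10514 — 5 statements merged into one kernel-verified Lean document; each statement's English description precedes it below -/
import Mathlib

section
/- Define linear operators on V = ℂ ⊕ ℂ³ ⊕ ℂ with basis f (top scalar), e_1, e_2, e_3 (vector), g (bottom scalar) by: ρ(J^{ij}) e_k = δ^{ik} e_j − δ^{jk} e_i, ρ(J^{ij}) f = ρ(J^{ij}) g = 0, ρ(B^i) f = e_i, ρ(B^i) e_j = δ^{ij} g, ρ(B^i) g = 0. Then ρ is a representation of the Lie algebra iso(3) (in particular all ρ(B^i) commute pairwise), and it is indecomposable. -/
/-!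
All commutation relations reduce to the matrix-unit rule `E_ab E_cd = δ_bc E_ad`.

For indecomposability, note that any product of three boosts vanishes: a boost lowers the
grading `f ↦ e ↦ g ↦ 0`. Hence every nonzero boost-invariant subspace contains a nonzero
vector killed by all boosts, i.e. a nonzero multiple of `g`, since the common kernel of the
boosts is the line `ℂ g`. So two nonzero invariant subspaces always share `g` and cannot be
complementary.
-/

open Matrix

/-- Embedding of the spatial index i ∈ {1,2,3} into the basis Fin 5 of the
    (0)→(1)→(0) module: index 0 is the top scalar f, 1..3 the vector eᵢ, 4 the bottom scalar g. -/
def spIdx (i : Fin 3) : Fin 5 := i.succ.castSucc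

/-- Rotations J^{ij} of the (0)→(1)→(0) chain representation on ℂ⁵. -/
noncomputable def chainJ (i j : Fin 3) : Module.End ℂ (Fin 5 → ℂ) :=
  Matrix.toLin' (Matrix.of fun m k : Fin 5 =>
    ((if m = spIdx j ∧ k = spIdx i then 1 else 0)
      - (if m = spIdx i ∧ k = spIdx j then 1 else 0) : ℂ))

/-- Boosts B^i of the (0)→(1)→(0) chain representation:
    B^i f = e_i, B^i e_j = δ^{ij} g, B^i g = 0. -/
noncomputable def chainB (i : Fin 3) : Module.End ℂ (Fin 5 → ℂ) :=
  Matrix.toLin' (Matrix.of fun m k : Fin 5 =>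
    ((if m = spIdx i ∧ k = 0 then 1 else 0) + (if m = 4 ∧ k = spIdx i then 1 else 0) : ℂ))

theorem Matrix.single_one_mul_single_one {n R : Type*} [Fintype n] [DecidableEq n] [Semiring R]
    (a b c d : n) : single a b (1 : R) * single c d 1 = if b = c then single a d 1 else 0 := by
  split_ifs with h
  · rw [h, single_mul_single_same, one_mul]
  · exact single_mul_single_of_ne (h := h) ..

theorem Matrix.toLin'_lie {n R : Type*} [Fintype n] [DecidableEq n] [CommRing R]
    (A B : Matrix n n R) : ⁅(toLin' A : Module.End R (n → R)), toLin' B⁆ = toLin' ⁅A, B⁆ := by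
  simp only [Ring.lie_def, map_sub, toLin'_mul, Module.End.mul_eq_comp]

section RotationsAndBoosts

variable {ι n R : Type*} [Fintype n] [DecidableEq n] [Ring R]

def rotationMatrix (e : ι → n) (i j : ι) : Matrix n n R :=
  single (e j) (e i) 1 - single (e i) (e j) 1

/-- The boost of the chain `top → e i → bot`. -/
def boostMatrix (e : ι → n) (top bot : n) (i : ι) : Matrix n n R :=
  single (e i) top 1 + single bot (e i) 1

variable {e : ι → n} {top bot : n}

theorem boostMatrix_mulVec (i : ι) (v : n → R) :
    boostMatrix e top bot i *ᵥ v = Pi.single (e i) (v top) + Pi.single bot (v (e i)) := by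
  simp only [boostMatrix, add_mulVec, single_mulVec, one_mul, Pi.single]

variable [DecidableEq ι]

theorem lie_rotationMatrix_rotationMatrix (he : e.Injective) (i j k l : ι) :
    ⁅(rotationMatrix e i j : Matrix n n R), rotationMatrix e k l⁆ =
      (if i = k then (rotationMatrix e j l : Matrix n n R) else 0)
        - (if i = l then rotationMatrix e j k else 0)
        + (if j = l then rotationMatrix e i k else 0)
        - (if j = k then rotationMatrix e i l else 0) := by
  simp only [rotationMatrix, Ring.lie_def, sub_mul, mul_sub, single_one_mul_single_one, he.eq_iff]
  split_ifs <;> subst_vars <;> simp_all <;> abel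

theorem lie_rotationMatrix_boostMatrix (htop : ∀ i, e i ≠ top) (hbot : ∀ i, e i ≠ bot)
    (he : e.Injective) (i j k : ι) :
    ⁅(rotationMatrix e i j : Matrix n n R), boostMatrix e top bot k⁆ =
      (if i = k then (boostMatrix e top bot j : Matrix n n R) else 0)
        - (if j = k then boostMatrix e top bot i else 0) := by
  simp only [rotationMatrix, boostMatrix, Ring.lie_def, sub_mul, mul_sub, add_mul, mul_add,
    single_one_mul_single_one, he.eq_iff, hbot, (htop _).symm, if_false]
  split_ifs <;> subst_vars <;> abel_nf <;> simp_all

theorem boostMatrix_mul_boostMatrix (htop : ∀ i, e i ≠ top) (hbot : ∀ i, e i ≠ bot)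
    (htb : top ≠ bot) (he : e.Injective) (i j : ι) :
    (boostMatrix e top bot i : Matrix n n R) * boostMatrix e top bot j =
      if i = j then single bot top 1 else 0 := by
  simp only [boostMatrix, add_mul, mul_add, single_one_mul_single_one, he.eq_iff, hbot,
    (htop _).symm, htb, if_false, zero_add]
  split_ifs <;> simp

theorem lie_boostMatrix_boostMatrix (htop : ∀ i, e i ≠ top) (hbot : ∀ i, e i ≠ bot)
    (htb : top ≠ bot) (he : e.Injective) (i j : ι) :
    ⁅(boostMatrix e top bot i : Matrix n n R), (boostMatrix e top bot j : Matrix n n R)⁆ = 0 := by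
  simp only [Ring.lie_def, boostMatrix_mul_boostMatrix htop hbot htb he, eq_comm (a := j),
    sub_self]

theorem boostMatrix_mul_boostMatrix_mul_boostMatrix (htop : ∀ i, e i ≠ top)
    (hbot : ∀ i, e i ≠ bot) (htb : top ≠ bot) (he : e.Injective) (i j k : ι) :
    (boostMatrix e top bot i : Matrix n n R) * boostMatrix e top bot j * boostMatrix e top bot k
      = 0 := by
  rw [boostMatrix_mul_boostMatrix htop hbot htb he]
  split_ifs
  · simp only [boostMatrix, mul_add, single_one_mul_single_one, (htop _).symm, htb, if_false,
      add_zero]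
  · exact zero_mul _

end RotationsAndBoosts

def KilledByProductsOfLength {ι R M : Type*} [Semiring R] [AddCommMonoid M] [Module R M]
    (T : ι → Module.End R M) : ℕ → M → Prop
  | 0, v => v = 0
  | n + 1, v => ∀ i, KilledByProductsOfLength T n (T i v)

theorem Submodule.exists_ne_zero_forall_apply_eq_zero {ι R M : Type*} [Semiring R]
    [AddCommMonoid M] [Module R M] {T : ι → Module.End R M} (W : Submodule R M)
    (hW : ∀ i, ∀ v ∈ W, T i v ∈ W) {n : ℕ} {v : M} (hv : v ∈ W) (hv0 : v ≠ 0)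
    (hkill : KilledByProductsOfLength T n v) : ∃ u ∈ W, u ≠ 0 ∧ ∀ i, T i u = 0 := by
  induction n generalizing v with
  | zero => exact absurd hkill hv0
  | succ n ih =>
    by_cases hker : ∀ i, T i v = 0
    · exact ⟨v, hv, hv0, hker⟩
    · push Not at hker
      obtain ⟨i, hi⟩ := hker
      exact ih (hW i v hv) hi (hkill i)

theorem spIdx_injective : spIdx.Injective :=
  (Fin.castSucc_injective 4).comp (Fin.succ_injective 3)

theorem spIdx_ne_zero (i : Fin 3) : spIdx i ≠ 0 := by fin_cases i <;> decide

theorem spIdx_ne_four (i : Fin 3) : spIdx i ≠ 4 := by fin_cases i <;> decide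

theorem chainJ_eq_toLin' (i j : Fin 3) : chainJ i j = toLin' (rotationMatrix spIdx i j) := by
  unfold chainJ
  congr 1
  ext m k
  simp [rotationMatrix, single_apply, eq_comm]

theorem chainB_eq_toLin' (i : Fin 3) : chainB i = toLin' (boostMatrix spIdx 0 4 i) := by
  unfold chainB
  congr 1
  ext m k
  simp [boostMatrix, single_apply, eq_comm, and_comm]

theorem killedByProductsOfLength_chainB_three (v : Fin 5 → ℂ) :
    KilledByProductsOfLength chainB 3 v := fun i j k => by
  show chainB k (chainB j (chainB i v)) = 0
  simp only [chainB_eq_toLin', toLin'_apply, mulVec_mulVec, ← mul_assoc,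
    boostMatrix_mul_boostMatrix_mul_boostMatrix spIdx_ne_zero spIdx_ne_four (by decide)
      spIdx_injective, zero_mulVec]

theorem eq_smul_single_four_of_forall_chainB_eq_zero {v : Fin 5 → ℂ}
    (hv : ∀ i, chainB i v = 0) : v = v 4 • Pi.single 4 1 := by
  have hcoord : ∀ i, v 0 = 0 ∧ v (spIdx i) = 0 := fun i => by
    have h := hv i
    rw [chainB_eq_toLin', toLin'_apply, boostMatrix_mulVec] at h
    exact ⟨by simpa [spIdx_ne_four] using congrFun h (spIdx i),
      by simpa [(spIdx_ne_four i).symm] using congrFun h 4⟩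
  funext m
  fin_cases m
  · simpa using (hcoord 0).1
  · simpa [spIdx] using (hcoord 0).2
  · simpa [spIdx] using (hcoord 1).2
  · simpa [spIdx] using (hcoord 2).2
  · simp

theorem single_four_mem_of_chainB_invariant (W : Submodule ℂ (Fin 5 → ℂ))
    (hW : ∀ i, ∀ v ∈ W, chainB i v ∈ W) (hne : W ≠ ⊥) : Pi.single (4 : Fin 5) (1 : ℂ) ∈ W := by
  obtain ⟨v, hv, hv0⟩ := W.exists_mem_ne_zero_of_ne_bot hne
  obtain ⟨u, hu, hu0, hker⟩ :=
    W.exists_ne_zero_forall_apply_eq_zero hW hv hv0 (killedByProductsOfLength_chainB_three v)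
  have hu_eq := eq_smul_single_four_of_forall_chainB_eq_zero hker
  have hu4 : u 4 ≠ 0 := fun h => hu0 (by rw [hu_eq, h, zero_smul])
  exact (W.smul_mem_iff hu4).mp (hu_eq ▸ hu)

/-- The (0)→(1)→(0) chain is a representation of iso(3) (with commuting boosts),
    and it is indecomposable. -/
theorem chain010_rep_indecomposable :
    (∀ i j k l, ⁅chainJ i j, chainJ k l⁆ =
      (if i = k then chainJ j l else 0) - (if i = l then chainJ j k else 0)
        + (if j = l then chainJ i k else 0) - (if j = k then chainJ i l else 0)) ∧
    (∀ i j k, ⁅chainJ i j, chainB k⁆ =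
      (if i = k then chainB j else 0) - (if j = k then chainB i else 0)) ∧
    (∀ i j, ⁅chainB i, chainB j⁆ = 0) ∧
    (¬ ∃ W₁ W₂ : Submodule ℂ (Fin 5 → ℂ),
      (∀ i j, ∀ v ∈ W₁, chainJ i j v ∈ W₁) ∧ (∀ i, ∀ v ∈ W₁, chainB i v ∈ W₁) ∧
      (∀ i j, ∀ v ∈ W₂, chainJ i j v ∈ W₂) ∧ (∀ i, ∀ v ∈ W₂, chainB i v ∈ W₂) ∧
      W₁ ≠ ⊥ ∧ W₂ ≠ ⊥ ∧ W₁ ⊓ W₂ = ⊥ ∧ W₁ ⊔ W₂ = ⊤) := by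
  refine ⟨fun i j k l => ?_, fun i j k => ?_, fun i j => ?_, ?_⟩
  · simp only [chainJ_eq_toLin', toLin'_lie, lie_rotationMatrix_rotationMatrix spIdx_injective,
      map_sub, map_add, apply_ite toLin', map_zero]
  · simp only [chainJ_eq_toLin', chainB_eq_toLin', toLin'_lie,
      lie_rotationMatrix_boostMatrix spIdx_ne_zero spIdx_ne_four spIdx_injective,
      map_sub, apply_ite toLin', map_zero]
  · rw [chainB_eq_toLin', chainB_eq_toLin', toLin'_lie,
      lie_boostMatrix_boostMatrix spIdx_ne_zero spIdx_ne_four (by decide) spIdx_injective, map_zero]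
  · rintro ⟨W₁, W₂, -, hB₁, -, hB₂, hne₁, hne₂, hinf, -⟩
    have hg : Pi.single (4 : Fin 5) (1 : ℂ) ∈ W₁ ⊓ W₂ :=
      ⟨single_four_mem_of_chainB_invariant W₁ hB₁ hne₁,
        single_four_mem_of_chainB_invariant W₂ hB₂ hne₂⟩
    rw [hinf, Submodule.mem_bot] at hg
    exact one_ne_zero (congrFun hg 4)
end

section
/- For a ∈ ℝ^{d−1} and a⁰ ∈ ℝ, define the special Carrollian conformal transformation K_{(a⁰,a)}(t, x) = ((t − a⁰ |x|²)/Ω, (x − a |x|²)/Ω) where Ω = 1 − 2 a·x + |a|² |x|², on the open set where Ω ≠ 0. Then these maps compose as a (local) abelian group action: K_{(a⁰,a)} ∘ K_{(b⁰,b)} = K_{(a⁰+b⁰, a+b)} wherever both sides are defined. -/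
/-- The conformal factor Ω = 1 − 2 a·x + |a|²|x|². -/
def sctOmega {k : ℕ} (a x : Fin k → ℝ) : ℝ :=
  1 - 2 * (∑ i, a i * x i) + (∑ i, a i * a i) * (∑ i, x i * x i)

/-- The special Carrollian conformal transformation
    K_{(a⁰,a)}(t,x) = ((t − a⁰|x|²)/Ω, (x − a|x|²)/Ω). -/
noncomputable def carrollSCT {k : ℕ} (a0 : ℝ) (a : Fin k → ℝ)
    (p : ℝ × (Fin k → ℝ)) : ℝ × (Fin k → ℝ) :=
  ((p.1 - a0 * (∑ i, p.2 i * p.2 i)) / sctOmega a p.2,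
    (sctOmega a p.2)⁻¹ • (p.2 - (∑ i, p.2 i * p.2 i) • a))

lemma sct_key1 {k : ℕ} (b x : Fin k → ℝ) :
    (∑ i, (x i - (∑ j, x j * x j) * b i) * (x i - (∑ j, x j * x j) * b i))
      = (∑ j, x j * x j) * sctOmega b x := by
  have h : ∀ i, (x i - (∑ j, x j * x j) * b i) * (x i - (∑ j, x j * x j) * b i)
      = x i * x i - 2 * (∑ j, x j * x j) * (b i * x i)
        + (∑ j, x j * x j) ^ 2 * (b i * b i) := fun i => by ring
  simp only [h, Finset.sum_add_distrib, Finset.sum_sub_distrib, ← Finset.mul_sum]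
  unfold sctOmega
  ring

lemma sct_key2 {k : ℕ} (a b x : Fin k → ℝ) :
    (∑ i, a i * (x i - (∑ j, x j * x j) * b i))
      = (∑ i, a i * x i) - (∑ j, x j * x j) * (∑ i, a i * b i) := by
  have h : ∀ i, a i * (x i - (∑ j, x j * x j) * b i)
      = a i * x i - (∑ j, x j * x j) * (a i * b i) := fun i => by ring
  simp only [h, Finset.sum_sub_distrib, ← Finset.mul_sum]

lemma sct_sumsq {k : ℕ} (b x : Fin k → ℝ) :
    (∑ i, ((sctOmega b x)⁻¹ * (x i - (∑ j, x j * x j) * b i))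
        * ((sctOmega b x)⁻¹ * (x i - (∑ j, x j * x j) * b i)))
      = (sctOmega b x)⁻¹ * (sctOmega b x)⁻¹ * ((∑ j, x j * x j) * sctOmega b x) := by
  have h : ∀ i, ((sctOmega b x)⁻¹ * (x i - (∑ j, x j * x j) * b i))
        * ((sctOmega b x)⁻¹ * (x i - (∑ j, x j * x j) * b i))
      = (sctOmega b x)⁻¹ * (sctOmega b x)⁻¹
        * ((x i - (∑ j, x j * x j) * b i) * (x i - (∑ j, x j * x j) * b i)) :=
    fun i => by ring
  simp only [h, ← Finset.mul_sum, sct_key1]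

lemma sct_suma {k : ℕ} (a b x : Fin k → ℝ) :
    (∑ i, a i * ((sctOmega b x)⁻¹ * (x i - (∑ j, x j * x j) * b i)))
      = (sctOmega b x)⁻¹ * ((∑ i, a i * x i) - (∑ j, x j * x j) * (∑ i, a i * b i)) := by
  have h : ∀ i, a i * ((sctOmega b x)⁻¹ * (x i - (∑ j, x j * x j) * b i))
      = (sctOmega b x)⁻¹ * (a i * (x i - (∑ j, x j * x j) * b i)) := fun i => by ring
  simp only [h, ← Finset.mul_sum, sct_key2]

lemma sct_scalar (t P AA S : ℝ) (ht : t ≠ 0) :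
    1 - 2 * (t⁻¹ * P) + AA * (t⁻¹ * t⁻¹ * (S * t)) = (t - 2 * P + AA * S) / t := by
  field_simp

lemma sct_omega_shift {k : ℕ} (a b x : Fin k → ℝ) (h1 : sctOmega b x ≠ 0) :
    sctOmega a (fun i => (sctOmega b x)⁻¹ * (x i - (∑ j, x j * x j) * b i))
      = sctOmega (a + b) x / sctOmega b x := by
  conv_lhs => rw [sctOmega]
  simp only [sct_sumsq]
  simp only [sct_suma]
  have hadd : sctOmega (a + b) x
      = 1 - 2 * ((∑ i, a i * x i) + (∑ i, b i * x i))
        + ((∑ i, a i * a i) + 2 * (∑ i, a i * b i) + (∑ i, b i * b i))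
          * (∑ j, x j * x j) := by
    unfold sctOmega
    have h1' : ∀ i, (a + b) i * x i = a i * x i + b i * x i := fun i => by
      simp [Pi.add_apply]; ring
    have h2' : ∀ i, (a + b) i * (a + b) i
        = a i * a i + 2 * (a i * b i) + b i * b i := fun i => by
      simp [Pi.add_apply]; ring
    simp only [h1', h2', Finset.sum_add_distrib, ← Finset.mul_sum]
  rw [hadd, sct_scalar _ _ _ _ h1]
  have hbx : sctOmega b x
      = 1 - 2 * (∑ i, b i * x i) + (∑ i, b i * b i) * (∑ j, x j * x j) := rfl
  rw [div_eq_div_iff h1 h1, hbx]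
  ring

/-- Special Carrollian conformal transformations compose as a (local) abelian group:
    K_{(a⁰,a)} ∘ K_{(b⁰,b)} = K_{(a⁰+b⁰, a+b)} wherever both sides are defined. -/
theorem carroll_sct_composition (d : ℕ) (a0 b0 : ℝ) (a b : Fin (d - 1) → ℝ)
    (p : ℝ × (Fin (d - 1) → ℝ))
    (h1 : sctOmega b p.2 ≠ 0)
    (h2 : sctOmega a (carrollSCT b0 b p).2 ≠ 0)
    (h3 : sctOmega (a + b) p.2 ≠ 0) :
    carrollSCT a0 a (carrollSCT b0 b p) = carrollSCT (a0 + b0) (a + b) p := by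
  obtain ⟨t, x⟩ := p
  simp only at h1 h3
  clear h2
  have hq : carrollSCT b0 b (t, x)
      = ((t - b0 * (∑ j, x j * x j)) / sctOmega b x,
          fun i => (sctOmega b x)⁻¹ * (x i - (∑ j, x j * x j) * b i)) := by
    unfold carrollSCT
    refine Prod.ext rfl ?_
    funext i
    simp [Pi.smul_apply, Pi.sub_apply, smul_eq_mul]
  rw [hq]
  unfold carrollSCT
  refine Prod.ext ?_ ?_
  · show ((t - b0 * (∑ j, x j * x j)) / sctOmega b x - a0 * _) / _ = _
    rw [sct_sumsq, sct_omega_shift a b x h1]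
    field_simp
    ring
  · funext i
    simp only [Pi.smul_apply, Pi.sub_apply, smul_eq_mul, Pi.add_apply]
    rw [sct_sumsq, sct_omega_shift a b x h1]
    field_simp
    ring
end

section
/- Let (t_n, x_n) ∈ ℝ × ℝ^{d−1}, n = 1,2,3,4, be four points with t₁₂ := t₁−t₂ ≠ 0 and similarly all pairwise time differences t_{mn} ≠ 0. Define the vector-valued quantity x⃗ = t·[(x₁₂/t₁₂ + x₃₄/t₃₄) − (x₁₃/t₁₃ + x₂₄/t₂₄)], where t = (t₁₂ t₃₄)/(t₁₃ t₂₄) and x_{mn} = x_m − x_n. Then x⃗ (and hence r = |x⃗|) is invariant under Galilean boosts (t_n, x_n) ↦ (t_n, x_n − t_n v) for every v ∈ ℝ^{d−1}, and under spatial translations (t_n, x_n) ↦ (t_n, x_n + a); moreover the cross-ratio t is invariant under time translations t_n ↦ t_n + c, dilatations (t_n, x_n) ↦ (λ t_n, λ x_n) with λ ≠ 0, and the maps t_n ↦ t_n/(1 − a⁰ t_n) (where defined). -/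
/-- The temporal cross-ratio t = t₁₂ t₃₄ / (t₁₃ t₂₄) of four insertions. -/
noncomputable def tCrossRatio (t : Fin 4 → ℝ) : ℝ :=
  ((t 0 - t 1) * (t 2 - t 3)) / ((t 0 - t 2) * (t 1 - t 3))

/-- The boost-invariant spatial 4-point invariant
    x⃗ = t·[(x₁₂/t₁₂ + x₃₄/t₃₄) − (x₁₃/t₁₃ + x₂₄/t₂₄)] of Galilean CFT. -/
noncomputable def xInvariant {k : ℕ} (t : Fin 4 → ℝ) (x : Fin 4 → Fin k → ℝ) :
    Fin k → ℝ :=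
  tCrossRatio t •
    (((t 0 - t 1)⁻¹ • (x 0 - x 1) + (t 2 - t 3)⁻¹ • (x 2 - x 3))
      - ((t 0 - t 2)⁻¹ • (x 0 - x 2) + (t 1 - t 3)⁻¹ • (x 1 - x 3)))

/-- Invariance of the Galilean 4-point invariants: x⃗ (hence r = |x⃗|) is invariant under
    Galilean boosts and spatial translations; the cross-ratio t is invariant under time
    translations, dilatations, and temporal special conformal transformations. -/
theorem gcft_four_point_invariants (d : ℕ) (t : Fin 4 → ℝ) (x : Fin 4 → Fin (d - 1) → ℝ)
    (ht : ∀ m n : Fin 4, m ≠ n → t m - t n ≠ 0) :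
    (∀ v : Fin (d - 1) → ℝ, xInvariant t (fun n => x n - (t n) • v) = xInvariant t x) ∧
    (∀ a : Fin (d - 1) → ℝ, xInvariant t (fun n => x n + a) = xInvariant t x) ∧
    (∀ c : ℝ, tCrossRatio (fun n => t n + c) = tCrossRatio t) ∧
    (∀ lam : ℝ, lam ≠ 0 → tCrossRatio (fun n => lam * t n) = tCrossRatio t) ∧
    (∀ a0 : ℝ, (∀ n, 1 - a0 * t n ≠ 0) →
      tCrossRatio (fun n => t n / (1 - a0 * t n)) = tCrossRatio t) := by
  have h01 := ht 0 1 (by decide)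
  have h23 := ht 2 3 (by decide)
  have h02 := ht 0 2 (by decide)
  have h13 := ht 1 3 (by decide)
  refine ⟨?_, ?_, ?_, ?_, ?_⟩
  · intro v
    funext i
    simp only [xInvariant, tCrossRatio, Pi.smul_apply, Pi.add_apply, Pi.sub_apply,
      smul_eq_mul]
    field_simp
    ring
  · intro a
    funext i
    simp only [xInvariant, tCrossRatio, Pi.smul_apply, Pi.add_apply, Pi.sub_apply,
      smul_eq_mul]
    ring
  · intro c
    simp only [tCrossRatio]
    ring_nf
  · intro lam hlam
    simp only [tCrossRatio]
    rw [show lam * t 0 - lam * t 1 = lam * (t 0 - t 1) by ring,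
      show lam * t 2 - lam * t 3 = lam * (t 2 - t 3) by ring,
      show lam * t 0 - lam * t 2 = lam * (t 0 - t 2) by ring,
      show lam * t 1 - lam * t 3 = lam * (t 1 - t 3) by ring]
    field_simp
  · intro a0 h
    simp only [tCrossRatio]
    have h0 := h 0; have h1 := h 1; have h2 := h 2; have h3 := h 3
    rw [div_sub_div _ _ (h 0) (h 1), div_sub_div _ _ (h 2) (h 3),
      div_sub_div _ _ (h 0) (h 2), div_sub_div _ _ (h 1) (h 3)]
    rw [div_mul_div_comm, div_mul_div_comm,
      show t 0 * (1 - a0 * t 1) - (1 - a0 * t 0) * t 1 = t 0 - t 1 by ring,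
      show t 2 * (1 - a0 * t 3) - (1 - a0 * t 2) * t 3 = t 2 - t 3 by ring,
      show t 0 * (1 - a0 * t 2) - (1 - a0 * t 0) * t 2 = t 0 - t 2 by ring,
      show t 1 * (1 - a0 * t 3) - (1 - a0 * t 1) * t 3 = t 1 - t 3 by ring,
      show (1 - a0 * t 0) * (1 - a0 * t 2) * ((1 - a0 * t 1) * (1 - a0 * t 3))
        = (1 - a0 * t 0) * (1 - a0 * t 1) * ((1 - a0 * t 2) * (1 - a0 * t 3)) by ring]
    rw [div_div_div_eq]
    have hD : (1 - a0 * t 0) * (1 - a0 * t 1) * ((1 - a0 * t 2) * (1 - a0 * t 3)) ≠ 0 :=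
      mul_ne_zero (mul_ne_zero h0 h1) (mul_ne_zero h2 h3)
    rw [mul_comm ((t 0 - t 1) * (t 2 - t 3)), mul_div_mul_left _ _ hD]
end

section
/- Let Δ₁, Δ₂ ∈ ℝ and let G : ℝ × (ℝ³ ∖ {0}) → ℝ be a smooth function of (t₁₂, x₁₂) (i.e., the translation-invariant form of a two-point function) satisfying, for all t₁, t₂ ∈ ℝ and all x₁ ≠ x₂ in ℝ³: (i) the boost Ward identities x₁^i ∂_{t₁} G + x₂^i ∂_{t₂} G = 0 for i = 1,2,3, where G is evaluated at (t₁−t₂, x₁−x₂); (ii) the temporal SCT Ward identity −|x₁|² ∂_{t₁} G − |x₂|² ∂_{t₂} G = 0; and (iii) the dilatation Ward identity (t₁₂ ∂_{t₁₂} + x₁₂·∂_{x₁₂} + Δ₁ + Δ₂) G = 0. If additionally G is rotation invariant (G depends on x₁₂ only through |x₁₂|), then there is a constant c such that G(t, x) = c |x|^{−(Δ₁+Δ₂)} for all t ∈ ℝ, x ≠ 0; in particular G is independent of t. -/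
/-!
Putting the second insertion at the origin, the boost identity reads `x^i ∂ₜ G(t, x) = 0`, so `G`
does not depend on time. By rotation invariance `G(t, x) = h(|x|)` for the profile
`h(r) = G(0, r e₀)`, and along the axis `e₀` the dilatation identity becomes the Euler equation
`r h'(r) + (Δ₁ + Δ₂) h(r) = 0`, whose solutions on `r > 0` are `h(r) = h(1) r^{-(Δ₁ + Δ₂)}`.
-/

open Function

theorem eq_mul_rpow_neg_of_mul_deriv_add_mul_eq_zero {h : ℝ → ℝ} {Δ : ℝ}
    (hd : ∀ r, 0 < r → DifferentiableAt ℝ h r)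
    (hode : ∀ r, 0 < r → r * deriv h r + Δ * h r = 0) {r : ℝ} (hr : 0 < r) :
    h r = h 1 * r ^ (-Δ) := by
  have hderiv : ∀ s, 0 < s → HasDerivAt (fun s => h s * s ^ Δ) 0 s := by
    intro s hs
    refine ((hd s hs).hasDerivAt.mul (Real.hasDerivAt_rpow_const (Or.inl hs.ne'))).congr_deriv ?_
    rw [Real.rpow_sub_one hs.ne']
    field_simp
    linear_combination s ^ Δ * hode s hs
  have hconst : h r * r ^ Δ = h 1 * 1 ^ Δ :=
    isOpen_Ioi.is_const_of_deriv_eq_zero isPreconnected_Ioi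
      (fun s hs => (hderiv s hs).differentiableAt.differentiableWithinAt)
      (fun s hs => (hderiv s hs).deriv) hr (Set.mem_Ioi.mpr one_pos)
  rw [Real.one_rpow, mul_one] at hconst
  rw [← hconst, Real.rpow_neg hr.le, mul_inv_cancel_right₀ (Real.rpow_pos_of_pos hr Δ).ne']

theorem DifferentiableOn.differentiableAt_comp_of_snd_ne_zero {E : Type*}
    [NormedAddCommGroup E] [NormedSpace ℝ E] {G : ℝ → E → ℝ}
    (hG : DifferentiableOn ℝ (fun p : ℝ × E => G p.1 p.2) {p | p.2 ≠ 0})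
    {γ : ℝ → ℝ × E} {s : ℝ} (hγ : DifferentiableAt ℝ γ s) (hs : (γ s).2 ≠ 0) :
    DifferentiableAt ℝ (fun s => G (γ s).1 (γ s).2) s :=
  (hG.differentiableAt ((isOpen_ne.preimage continuous_snd).mem_nhds hs)).comp s hγ

section WardIdentities

variable {ι : Type*} {G : ℝ → (ι → ℝ) → ℝ}

theorem deriv_eq_zero_of_boost_ward
    (hB : ∀ (i : ι) (t₁ t₂ : ℝ) (x₁ x₂ : ι → ℝ), x₁ ≠ x₂ →
      x₁ i * deriv (fun s => G (s - t₂) (x₁ - x₂)) t₁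
        + x₂ i * deriv (fun s => G (t₁ - s) (x₁ - x₂)) t₂ = 0)
    (t : ℝ) {x : ι → ℝ} (hx : x ≠ 0) : deriv (fun s => G s x) t = 0 := by
  obtain ⟨i, hi⟩ := Function.ne_iff.mp hx
  have hboost := hB i t 0 x 0 hx
  simp only [sub_zero, Pi.zero_apply, zero_mul, add_zero] at hboost
  exact (mul_eq_zero.mp hboost).resolve_left hi

variable [Fintype ι]

theorem eq_of_boost_ward
    (hG : DifferentiableOn ℝ (fun p : ℝ × (ι → ℝ) => G p.1 p.2) {p | p.2 ≠ 0})
    (hB : ∀ (i : ι) (t₁ t₂ : ℝ) (x₁ x₂ : ι → ℝ), x₁ ≠ x₂ →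
      x₁ i * deriv (fun s => G (s - t₂) (x₁ - x₂)) t₁
        + x₂ i * deriv (fun s => G (t₁ - s) (x₁ - x₂)) t₂ = 0)
    (t : ℝ) {x : ι → ℝ} (hx : x ≠ 0) : G t x = G 0 x :=
  is_const_of_deriv_eq_zero
    (fun s => hG.differentiableAt_comp_of_snd_ne_zero (γ := fun s => (s, x)) (by fun_prop) hx)
    (fun s => deriv_eq_zero_of_boost_ward hB s hx) t 0

variable [DecidableEq ι]

theorem sum_single_mul_deriv_update (f : (ι → ℝ) → ℝ) (j : ι) (r : ℝ) :
    ∑ i, (Pi.single j r : ι → ℝ) i *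
        deriv (fun s => f (update (Pi.single j r) i s)) ((Pi.single j r : ι → ℝ) i) =
      r * deriv (fun s => f (Pi.single j s)) r := by
  rw [Fintype.sum_eq_single j fun i hi => by rw [Pi.single_eq_of_ne hi, zero_mul]]
  simp only [Pi.single, update_idem, update_self]

theorem mul_deriv_add_mul_eq_zero_of_dilatation_ward {Δ : ℝ}
    (hD : ∀ (t : ℝ) (x : ι → ℝ), x ≠ 0 →
      t * deriv (fun s => G s x) t
        + (∑ i, x i * deriv (fun s => G t (update x i s)) (x i))
        + Δ * G t x = 0)
    (j : ι) {r : ℝ} (hr : r ≠ 0) :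
    r * deriv (fun s => G 0 (Pi.single j s)) r + Δ * G 0 (Pi.single j r) = 0 := by
  have hdil := hD 0 (Pi.single j r) (Pi.single_eq_zero_iff.not.mpr hr)
  rwa [zero_mul, zero_add, sum_single_mul_deriv_update] at hdil

end WardIdentities

theorem ccft4_singlet_two_point_general (Δ₁ Δ₂ : ℝ) (G : ℝ → (Fin 3 → ℝ) → ℝ)
    (hsm : ContDiffOn ℝ (⊤ : ℕ∞) (fun p : ℝ × (Fin 3 → ℝ) => G p.1 p.2) {p | p.2 ≠ 0})
    (hB : ∀ (i : Fin 3) (t₁ t₂ : ℝ) (x₁ x₂ : Fin 3 → ℝ), x₁ ≠ x₂ →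
      x₁ i * deriv (fun s => G (s - t₂) (x₁ - x₂)) t₁
        + x₂ i * deriv (fun s => G (t₁ - s) (x₁ - x₂)) t₂ = 0)
    (hD : ∀ (t : ℝ) (x : Fin 3 → ℝ), x ≠ 0 →
      t * deriv (fun s => G s x) t
        + (∑ i, x i * deriv (fun s => G t (Function.update x i s)) (x i))
        + (Δ₁ + Δ₂) * G t x = 0)
    (hrot : ∀ (t : ℝ) (x y : Fin 3 → ℝ),
      (∑ i, x i * x i) = (∑ i, y i * y i) → G t x = G t y) :
    ∃ c : ℝ, ∀ (t : ℝ) (x : Fin 3 → ℝ), x ≠ 0 →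
      G t x = c * Real.sqrt (∑ i, x i * x i) ^ (-(Δ₁ + Δ₂)) := by
  have hG : DifferentiableOn ℝ (fun p : ℝ × (Fin 3 → ℝ) => G p.1 p.2) {p | p.2 ≠ 0} :=
    hsm.differentiableOn (by simp)
  set h : ℝ → ℝ := fun r => G 0 (Pi.single 0 r)
  have hprofile : ∀ r, 0 < r → h r = h 1 * r ^ (-(Δ₁ + Δ₂)) := fun r hr =>
    eq_mul_rpow_neg_of_mul_deriv_add_mul_eq_zero
      (fun s hs => hG.differentiableAt_comp_of_snd_ne_zero (γ := fun s => (0, Pi.single 0 s))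
        ((differentiableAt_const _).prodMk (hasDerivAt_single 0 s).differentiableAt)
        (Pi.single_eq_zero_iff.not.mpr hs.ne'))
      (fun s hs => mul_deriv_add_mul_eq_zero_of_dilatation_ward hD 0 hs.ne') hr
  refine ⟨h 1, fun t x hx => ?_⟩
  have hS : 0 ≤ ∑ i, x i * x i := Finset.sum_nonneg fun i _ => mul_self_nonneg (x i)
  have hR : 0 < √(∑ i, x i * x i) :=
    Real.sqrt_pos.mpr (hS.lt_of_ne' (dotProduct_self_eq_zero.not.mpr hx))
  have hxR : ∑ i, x i * x i =
      Pi.single 0 √(∑ i, x i * x i) ⬝ᵥ (Pi.single 0 √(∑ i, x i * x i) : Fin 3 → ℝ) := by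
    rw [dotProduct_single, Pi.single_eq_same, Real.mul_self_sqrt hS]
  rw [eq_of_boost_ward hG hB t hx, hrot 0 x _ hxR]
  exact hprofile _ hR

/-- The Carrollian conformal Ward identities fix the (power-law branch of the)
    two-point function of scalar singlet primaries in 4d CCFT:
    any smooth, rotation-invariant G(t₁₂, x₁₂) satisfying the boost, temporal-SCT
    and dilatation Ward identities equals c·|x₁₂|^{−(Δ₁+Δ₂)}, independent of time. -/
theorem ccft4_singlet_two_point (Δ₁ Δ₂ : ℝ) (G : ℝ → (Fin 3 → ℝ) → ℝ)
    (hsm : ContDiffOn ℝ (⊤ : ℕ∞) (fun p : ℝ × (Fin 3 → ℝ) => G p.1 p.2) {p | p.2 ≠ 0})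
    (hB : ∀ (i : Fin 3) (t₁ t₂ : ℝ) (x₁ x₂ : Fin 3 → ℝ), x₁ ≠ x₂ →
      x₁ i * deriv (fun s => G (s - t₂) (x₁ - x₂)) t₁
        + x₂ i * deriv (fun s => G (t₁ - s) (x₁ - x₂)) t₂ = 0)
    (hK0 : ∀ (t₁ t₂ : ℝ) (x₁ x₂ : Fin 3 → ℝ), x₁ ≠ x₂ →
      -(∑ i, x₁ i * x₁ i) * deriv (fun s => G (s - t₂) (x₁ - x₂)) t₁
        - (∑ i, x₂ i * x₂ i) * deriv (fun s => G (t₁ - s) (x₁ - x₂)) t₂ = 0)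
    (hD : ∀ (t : ℝ) (x : Fin 3 → ℝ), x ≠ 0 →
      t * deriv (fun s => G s x) t
        + (∑ i, x i * deriv (fun s => G t (Function.update x i s)) (x i))
        + (Δ₁ + Δ₂) * G t x = 0)
    (hrot : ∀ (t : ℝ) (x y : Fin 3 → ℝ),
      (∑ i, x i * x i) = (∑ i, y i * y i) → G t x = G t y) :
    ∃ c : ℝ, ∀ (t : ℝ) (x : Fin 3 → ℝ), x ≠ 0 →
      G t x = c * Real.sqrt (∑ i, x i * x i) ^ (-(Δ₁ + Δ₂)) :=
  ccft4_singlet_two_point_general Δ₁ Δ₂ G hsm hB hD hrot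
end

section
/- Let f = f(t₁, x₁, t₂, x₂) be a smooth function on (ℝ × ℝ³)² of the translation-invariant form f = F(t₁−t₂, x₁−x₂), and suppose the Galilean boost Ward identities hold for scalar singlets: (−t₁ ∂_{x₁^i} − t₂ ∂_{x₂^i}) f = 0 for i = 1,2,3 and all points. Then F(t, x) is independent of x on the region t ≠ 0. If moreover the dilatation Ward identity (t ∂_t + x·∂_x + Δ₁ + Δ₂) F = 0 holds and F is even in t, then F(t,x) = c |t|^{−(Δ₁+Δ₂)} for t ≠ 0 for some constant c. -/
/-!
Putting the second point at the origin in the boost Ward identity gives `t ∂_{xⁱ} F(t, x) = 0`,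
so for `t ≠ 0` every partial derivative of `F(t, ·)` vanishes and `F(t, ·)` is constant.
At `x = 0` the dilatation Ward identity is Euler's equation `t g' + Δ g = 0`, along which
`g(t) t^Δ` has zero derivative on `t > 0`; evenness in `t` covers `t < 0`.
-/

open Function Set

theorem eq_of_forall_update_eq {ι β : Type*} {α : ι → Type*} [Finite ι] [DecidableEq ι]
    {f : (∀ i, α i) → β} (h : ∀ z i (a : α i), f (update z i a) = f z) (x y : ∀ i, α i) :
    f x = f y := by
  cases nonempty_fintype ι
  suffices ∀ s : Finset ι, f x = f (s.piecewise y x) by simpa using this Finset.univ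
  intro s
  induction s using Finset.induction_on with
  | empty => simp
  | insert i s _ ih => rw [Finset.piecewise_insert, h, ih]

theorem eq_of_forall_deriv_update_eq_zero {ι E : Type*} [Fintype ι] [DecidableEq ι]
    [NormedAddCommGroup E] [NormedSpace ℝ E] {f : (ι → ℝ) → E} (hf : Differentiable ℝ f)
    (h : ∀ z i, deriv (fun s => f (update z i s)) (z i) = 0) (x y : ι → ℝ) : f x = f y := by
  refine eq_of_forall_update_eq (fun z i a => ?_) x y
  have hconst := is_const_of_deriv_eq_zero (f := fun s => f (update z i s))
    (fun s => hf.differentiableAt.comp s (hasFDerivAt_update z s).differentiableAt)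
    (fun s => by simpa using h (update z i s) i) a (z i)
  rwa [update_eq_self] at hconst

theorem eq_mul_rpow_neg_of_euler {g : ℝ → ℝ} {Δ : ℝ} (hg : DifferentiableOn ℝ g (Ioi 0))
    (hode : ∀ t, 0 < t → t * deriv g t + Δ * g t = 0) {t : ℝ} (ht : 0 < t) :
    g t = g 1 * t ^ (-Δ) := by
  have hderiv : ∀ s ∈ Ioi (0 : ℝ), HasDerivAt (fun s => g s * s ^ Δ) 0 s := by
    intro s (hs : 0 < s)
    refine ((hg.differentiableAt (Ioi_mem_nhds hs)).hasDerivAt.mul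
      (Real.hasDerivAt_rpow_const (p := Δ) (Or.inl hs.ne'))).congr_deriv ?_
    rw [Real.rpow_sub_one hs.ne']
    field_simp
    linear_combination s ^ Δ * hode s hs
  have hconst : g t * t ^ Δ = g 1 * 1 ^ Δ :=
    isOpen_Ioi.is_const_of_deriv_eq_zero isPreconnected_Ioi
      (fun s hs => (hderiv s hs).differentiableAt.differentiableWithinAt)
      (fun s hs => (hderiv s hs).deriv) ht (mem_Ioi.2 one_pos)
  rw [Real.one_rpow, mul_one] at hconst
  rw [Real.rpow_neg ht.le, ← hconst]
  field_simp [(Real.rpow_pos_of_pos ht Δ).ne']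
/-- In Galilean CFT, the boost Ward identities force the singlet two-point function
    F(t₁₂, x₁₂) to be independent of the spatial separation for t ≠ 0; together with
    the dilatation Ward identity and evenness in t it is a pure power law c|t|^{−(Δ₁+Δ₂)}. -/
theorem gcft_singlet_two_point (Δ₁ Δ₂ : ℝ) (F : ℝ → (Fin 3 → ℝ) → ℝ)
    (hsm : ContDiff ℝ (⊤ : ℕ∞) (fun p : ℝ × (Fin 3 → ℝ) => F p.1 p.2))
    (hB : ∀ (i : Fin 3) (t₁ t₂ : ℝ) (x₁ x₂ : Fin 3 → ℝ),
      -t₁ * deriv (fun s => F (t₁ - t₂) (Function.update x₁ i s - x₂)) (x₁ i)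
        - t₂ * deriv (fun s => F (t₁ - t₂) (x₁ - Function.update x₂ i s)) (x₂ i) = 0) :
    (∀ (t : ℝ) (x y : Fin 3 → ℝ), t ≠ 0 → F t x = F t y) ∧
    ((∀ (t : ℝ) (x : Fin 3 → ℝ), t ≠ 0 →
        t * deriv (fun s => F s x) t
          + (∑ i, x i * deriv (fun s => F t (Function.update x i s)) (x i))
          + (Δ₁ + Δ₂) * F t x = 0) →
      (∀ (t : ℝ) (x : Fin 3 → ℝ), F (-t) x = F t x) →
      ∃ c : ℝ, ∀ (t : ℝ) (x : Fin 3 → ℝ), t ≠ 0 →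
        F t x = c * |t| ^ (-(Δ₁ + Δ₂))) := by
  have hF : Differentiable ℝ (fun p : ℝ × (Fin 3 → ℝ) => F p.1 p.2) :=
    hsm.differentiable (by simp)
  have hx : ∀ (t : ℝ) (x y : Fin 3 → ℝ), t ≠ 0 → F t x = F t y := by
    intro t x y ht
    refine eq_of_forall_deriv_update_eq_zero
      (hF.comp ((differentiable_const t).prodMk differentiable_id)) (fun z i => ?_) x y
    simpa [ht] using hB i t 0 z 0
  refine ⟨hx, fun hD heven => ⟨F 1 0, fun t x ht => ?_⟩⟩
  have hpow : ∀ s, 0 < s → F s 0 = F 1 0 * s ^ (-(Δ₁ + Δ₂)) := fun s hs =>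
    eq_mul_rpow_neg_of_euler (g := fun s => F s 0)
      (hF.comp (differentiable_id.prodMk (differentiable_const 0))).differentiableOn
      (fun s hs => by simpa using hD s 0 hs.ne') hs
  calc F t x = F |t| 0 := by
        rcases abs_choice t with h | h <;> rw [h, hx t x 0 ht]
        exact (heven t 0).symm
    _ = F 1 0 * |t| ^ (-(Δ₁ + Δ₂)) := hpow |t| (abs_pos.2 ht)
end
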